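/- arXiv:2605.17764 — 6 statements merged into one kernel-verified Lean document; each statement's English description precedes it below -/
import Mathlib

section
/- Let b : ℕ → ℝ be a probability mass function with b(n) > 0 for all n and ∑ b(n) = 1, λᵇ(n) = b(n+1)/b(n). Let F = {n₀ < n₁ < ... < n_m} ⊆ {0, ..., q} and α : F → ℝ with α(nᵢ) > 0. Define λ(n) as in the type 1 modification: λ(n) = (α(n+1)^[n+1∈F]/α(n)^[n∈F])·λᵇ(n) for n < q, λ(q) = λᵇ(q)/α(q)^[q∈F], λ(n) = λᵇ(n) for n > q. Then the stationary distribution p(0) = (1 + ∑_{i≥0} ∏_{j≤i} λ(j))⁻¹, p(n) = λ(0)⋯λ(n-1)·p(0) satisfies p(n) = f(n)·b(n)/z, where f(n) = ∏ᵢ α(nᵢ)^{1_{n=nᵢ}} and z = 1 + ∑ᵢ (α(nᵢ) - 1)·b(nᵢ). -/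
/-!
The modified ratios are exactly the successive ratios of the weights `f n * b n`, so the
products `λ₀ ⋯ λₙ₋₁` telescope to `f n * b n / (f 0 * b 0)`. Since `f = 1` off the finite set
`F`, the weights sum to `z`, and normalizing gives `p n = f n * b n / z`.
-/

open Finset

theorem prod_range_div_of_ne_zero {G : Type*} [CommGroupWithZero G] (w : ℕ → G)
    (hw : ∀ n, w n ≠ 0) (n : ℕ) : ∏ i ∈ range n, w (i + 1) / w i = w n / w 0 := by
  induction n with
  | zero => simp [hw 0]
  | succ n ih =>
    rw [prod_range_succ, ih]
    field_simp [hw n]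

theorem stationary_eq_weight_div_sum (w : ℕ → ℝ) (Z : ℝ) (hw : ∀ n, w n ≠ 0)
    (hwZ : HasSum w Z) (lam : ℕ → ℝ) (hlam : ∀ n, lam n = w (n + 1) / w n) (p : ℕ → ℝ)
    (hp0 : p 0 = (1 + ∑' i : ℕ, ∏ j ∈ range (i + 1), lam j)⁻¹)
    (hpn : ∀ n, p n = (∏ j ∈ range n, lam j) * p 0) (n : ℕ) :
    p n = w n / Z := by
  have hprod (n : ℕ) : ∏ j ∈ range n, lam j = w n / w 0 := by
    simp only [hlam, prod_range_div_of_ne_zero w hw]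
  have htail : HasSum (fun i ↦ w (i + 1)) (Z - w 0) := by
    simpa using (hasSum_nat_add_iff' 1).mpr hwZ
  have hp0' : p 0 = w 0 / Z := by
    calc p 0 = (1 + (Z - w 0) / w 0)⁻¹ := by
          simp only [hp0, hprod, tsum_div_const, htail.tsum_eq]
      _ = w 0 / Z := by field_simp [hw 0]; ring
  rw [hpn, hprod, hp0']
  field_simp [hw 0]

theorem hasSum_ite_mul_add {ι R : Type*} [DecidableEq ι] [Ring R] [TopologicalSpace R]
    [ContinuousAdd R] {b : ι → R} {B : R} (hb : HasSum b B) (F : Finset ι) (α : ι → R) :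
    HasSum (fun n ↦ (if n ∈ F then α n else 1) * b n) (B + ∑ k ∈ F, (α k - 1) * b k) := by
  have hcorr : HasSum (fun n ↦ if n ∈ F then (α n - 1) * b n else 0)
      (∑ k ∈ F, (α k - 1) * b k) := by
    simpa using hasSum_sum_of_ne_finset_zero (s := F)
      (f := fun n ↦ if n ∈ F then (α n - 1) * b n else 0) (fun k hk ↦ if_neg hk)
  convert hb.add hcorr using 1
  funext n
  split_ifs <;> noncomm_ring

theorem type1_ratio_eq_weight_ratio {b lb α lam f : ℕ → ℝ} {q : ℕ} {F : Finset ℕ}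
    (hb : ∀ n, b n ≠ 0) (hlb : ∀ n, lb n = b (n + 1) / b n) (hF : F ⊆ range (q + 1))
    (hα : ∀ n ∈ F, α n ≠ 0)
    (hlam_lt : ∀ n, n < q →
      lam n = ((if n + 1 ∈ F then α (n + 1) else 1) / (if n ∈ F then α n else 1)) * lb n)
    (hlam_q : lam q = lb q / (if q ∈ F then α q else 1))
    (hlam_gt : ∀ n, q < n → lam n = lb n)
    (hf : ∀ n, f n = if n ∈ F then α n else 1) (n : ℕ) :
    lam n = f (n + 1) * b (n + 1) / (f n * b n) := by
  have hf_ne (n : ℕ) : f n ≠ 0 := by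
    rw [hf]; split_ifs with h
    exacts [hα n h, one_ne_zero]
  have hf_gt (n : ℕ) (hn : q < n) : f n = 1 := by
    rw [hf, if_neg]
    intro h
    have := mem_range.mp (hF h)
    omega
  rcases lt_trichotomy n q with h | rfl | h
  · rw [hlam_lt n h, hlb, ← hf, ← hf]
    field_simp [hf_ne, hb]
  · rw [hlam_q, hlb, ← hf, hf_gt (n + 1) n.lt_succ_self]
    field_simp [hf_ne, hb]
  · rw [hlam_gt n h, hlb, hf_gt n h, hf_gt (n + 1) (by omega)]
    field_simp [hb]

/-- The stationary distribution of the birth-death process with type-1 modified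
ratios equals the weight function times the base distribution, normalized. -/
theorem type1_stationary_form
    (b : ℕ → ℝ) (hb_pos : ∀ n, 0 < b n) (hb_sum : HasSum b 1)
    (lb : ℕ → ℝ) (hlb : ∀ n, lb n = b (n + 1) / b n)
    (q : ℕ) (F : Finset ℕ) (hF : F ⊆ Finset.range (q + 1))
    (α : ℕ → ℝ) (hα : ∀ n ∈ F, 0 < α n)
    (lam : ℕ → ℝ)
    (hlam_lt : ∀ n, n < q →
      lam n = ((if n + 1 ∈ F then α (n + 1) else 1) /
               (if n ∈ F then α n else 1)) * lb n)
    (hlam_q : lam q = lb q / (if q ∈ F then α q else 1))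
    (hlam_gt : ∀ n, q < n → lam n = lb n)
    (p : ℕ → ℝ)
    (hp0 : p 0 = (1 + ∑' i : ℕ, ∏ j ∈ Finset.range (i + 1), lam j)⁻¹)
    (hpn : ∀ n, p n = (∏ j ∈ Finset.range n, lam j) * p 0)
    (f : ℕ → ℝ) (hf : ∀ n, f n = if n ∈ F then α n else 1)
    (z : ℝ) (hz : z = 1 + ∑ k ∈ F, (α k - 1) * b k) :
    ∀ n, p n = f n * b n / z := by
  have hb_ne (n : ℕ) : b n ≠ 0 := (hb_pos n).ne'
  have hα_ne (n : ℕ) (hn : n ∈ F) : α n ≠ 0 := (hα n hn).ne'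
  have hw_ne (n : ℕ) : f n * b n ≠ 0 := by
    rw [hf]; split_ifs with h
    exacts [mul_ne_zero (hα_ne n h) (hb_ne n), by simpa using hb_ne n]
  have hw_sum : HasSum (fun n ↦ f n * b n) z := by
    simpa only [hf, hz] using hasSum_ite_mul_add hb_sum F α
  exact stationary_eq_weight_div_sum _ z hw_ne hw_sum lam
    (type1_ratio_eq_weight_ratio hb_ne hlb hF hα_ne hlam_lt hlam_q hlam_gt hf) p hp0 hpn
end

section
/- Let b : ℕ → ℝ be a probability distribution with b(n) > 0, and F = {n₀, ..., n_m}. Given ω : F → ℝ with s := ∑ᵢ ω(nᵢ) satisfying 1 - s > 0 and ω(n) + (1 - s)·b(n) > 0 for all n ∈ F, define α(n) = (ω(n) + (1 - s)·b(n)) / ((1 - s)·b(n)) for n ∈ F. Then α(n) > 0 for all n ∈ F, and for every n ∈ ℕ, ω(n)·1_{n∈F} + (1 - s)·b(n) = α(n)^{1_F(n)}·b(n) / (1 + ∑ᵢ (α(nᵢ) - 1)·b(nᵢ)). -/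
/-! With `c = 1 - ∑ ω`, each excess weight `(αₙ - 1) b(n)` equals `ωₙ / c`, so the type 1
normalizer `1 + ∑ (αₖ - 1) b(k)` is `1 / c`; dividing by it multiplies by `c`, and
`αₙ b(n) c = ωₙ + c b(n)`. -/

lemma sub_one_mul_eq_div {w c b : ℝ} (hc : c ≠ 0) (hb : b ≠ 0) :
    ((w + c * b) / (c * b) - 1) * b = w / c := by
  field_simp
  ring

lemma one_add_sum_sub_one_mul_eq_inv (b ω α : ℕ → ℝ) (F : Finset ℕ)
    (hb : ∀ n ∈ F, b n ≠ 0) (hs : 1 - ∑ k ∈ F, ω k ≠ 0)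
    (hα : ∀ n ∈ F, α n =
      (ω n + (1 - ∑ k ∈ F, ω k) * b n) / ((1 - ∑ k ∈ F, ω k) * b n)) :
    1 + ∑ k ∈ F, (α k - 1) * b k = (1 - ∑ k ∈ F, ω k)⁻¹ := by
  have hexcess : ∀ k ∈ F, (α k - 1) * b k = ω k / (1 - ∑ k ∈ F, ω k) := fun k hk => by
    rw [hα k hk, sub_one_mul_eq_div hs (hb k hk)]
  rw [Finset.sum_congr rfl hexcess, ← Finset.sum_div]
  field_simp
  ring

theorem mixture_eq_type1_of_omega_general
    (b : ℕ → ℝ) (hb_pos : ∀ n, 0 < b n)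
    (F : Finset ℕ) (ω : ℕ → ℝ)
    (hs : 1 - ∑ k ∈ F, ω k > 0)
    (hpos : ∀ n ∈ F, ω n + (1 - ∑ k ∈ F, ω k) * b n > 0)
    (α : ℕ → ℝ)
    (hα : ∀ n ∈ F, α n =
      (ω n + (1 - ∑ k ∈ F, ω k) * b n) / ((1 - ∑ k ∈ F, ω k) * b n)) :
    (∀ n ∈ F, 0 < α n) ∧
    ∀ n, (if n ∈ F then ω n else 0) + (1 - ∑ k ∈ F, ω k) * b n =
      (if n ∈ F then α n else 1) * b n /
        (1 + ∑ k ∈ F, (α k - 1) * b k) := by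
  have hb : ∀ n, b n ≠ 0 := fun n => (hb_pos n).ne'
  refine ⟨fun n hn => ?_, fun n => ?_⟩
  · rw [hα n hn]
    exact div_pos (hpos n hn) (mul_pos hs (hb_pos n))
  · rw [one_add_sum_sub_one_mul_eq_inv b ω α F (fun n _ => hb n) hs.ne' hα, div_inv_eq_mul]
    split_ifs with hn
    · rw [hα n hn]
      field_simp [hb n, hs.ne']
    · ring

/-- Equivalence (ω → α direction): admissible mixture weights ω give the same
distribution in type 1 stationary form with αₙ = (ωₙ + (1-s)b(n))/((1-s)b(n)). -/
theorem mixture_eq_type1_of_omega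
    (b : ℕ → ℝ) (hb_pos : ∀ n, 0 < b n) (hb_sum : HasSum b 1)
    (F : Finset ℕ) (ω : ℕ → ℝ)
    (hs : 1 - ∑ k ∈ F, ω k > 0)
    (hpos : ∀ n ∈ F, ω n + (1 - ∑ k ∈ F, ω k) * b n > 0)
    (α : ℕ → ℝ)
    (hα : ∀ n ∈ F, α n =
      (ω n + (1 - ∑ k ∈ F, ω k) * b n) / ((1 - ∑ k ∈ F, ω k) * b n)) :
    (∀ n ∈ F, 0 < α n) ∧
    ∀ n, (if n ∈ F then ω n else 0) + (1 - ∑ k ∈ F, ω k) * b n =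
      (if n ∈ F then α n else 1) * b n /
        (1 + ∑ k ∈ F, (α k - 1) * b k) :=
  mixture_eq_type1_of_omega_general b hb_pos F ω hs hpos α hα
end

section
/- Let b : ℕ → ℝ be a probability distribution with b(0) ∈ (0, 1). For ω ∈ (b(0)/(b(0) - 1), 1), define the zero-inflated-deflated model p(0) = ω + (1 - ω)·b(0) and p(n) = (1 - ω)·b(n) for n > 0. Then p(n) > 0 for all n with b(n) > 0, ∑ p(n) = 1, and the map ω ↦ ψ = log((ω + (1-ω)b(0))/((1-ω)b(0))) is a strictly increasing bijection from (b(0)/(b(0)-1), 1) onto ℝ, with ω = 0 mapping to ψ = 0. -/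
/-!
Mixing in a point mass at `0` with weight `ω` keeps the total mass `ω + (1 - ω) = 1`,
and `p 0 > 0` exactly when `ω > b 0 / (b 0 - 1)`. The link is `log` of the ratio
`r(ω) = p 0 / ((1 - ω) b 0) = 1 + ω / ((1 - ω) b 0)`, a Möbius map sending the admissible
interval increasingly onto `(0, ∞)`, which `log` sends increasingly onto `ℝ`.
-/

open Set

theorem HasSum.inflate_at {ι R : Type*} [Ring R] [TopologicalSpace R] [IsTopologicalRing R]
    [DecidableEq ι] {b p : ι → R} {s : R} (hb : HasSum b s) (i₀ : ι) (ω : R)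
    (hp₀ : p i₀ = ω + (1 - ω) * b i₀) (hp : ∀ i, i ≠ i₀ → p i = (1 - ω) * b i) :
    HasSum p (ω + (1 - ω) * s) := by
  have hp_eq : p = fun i => (1 - ω) * b i + if i = i₀ then ω else 0 := by
    funext i
    by_cases hi : i = i₀
    · subst hi; simp [hp₀, add_comm]
    · simp [hp i hi, hi]
  rw [hp_eq, add_comm ω]
  exact (hb.mul_left _).add (hasSum_ite_eq i₀ ω)

theorem add_one_sub_mul_pos_of_mem_Ioo {c w : ℝ} (hc : c < 1) (hw : w ∈ Ioo (c / (c - 1)) 1) :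
    0 < w + (1 - w) * c := by
  have h := (div_lt_iff_of_neg (sub_neg.mpr hc)).mp hw.1
  linarith

noncomputable def inflationRatio (c w : ℝ) : ℝ := (w + (1 - w) * c) / ((1 - w) * c)

theorem inflationRatio_eq (c : ℝ) {w : ℝ} (hc : c ≠ 0) (hw : w ≠ 1) :
    inflationRatio c w = c⁻¹ * (1 - w)⁻¹ + (1 - c⁻¹) := by
  have : 1 - w ≠ 0 := sub_ne_zero.mpr hw.symm
  unfold inflationRatio
  field_simp
  ring

theorem inflationRatio_zero {c : ℝ} (hc : c ≠ 0) : inflationRatio c 0 = 1 := by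
  simp [inflationRatio, hc]

theorem strictMonoOn_inflationRatio {c : ℝ} (hc : 0 < c) :
    StrictMonoOn (inflationRatio c) (Iio 1) := by
  intro x hx y hy hxy
  rw [inflationRatio_eq c hc.ne' hx.ne, inflationRatio_eq c hc.ne' hy.ne]
  gcongr
  exact sub_pos.mpr hy

theorem mapsTo_inflationRatio {c : ℝ} (hc₀ : 0 < c) (hc₁ : c < 1) :
    MapsTo (inflationRatio c) (Ioo (c / (c - 1)) 1) (Ioi 0) := fun _ hw =>
  div_pos (add_one_sub_mul_pos_of_mem_Ioo hc₁ hw) (mul_pos (sub_pos.mpr hw.2) hc₀)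

theorem surjOn_inflationRatio {c : ℝ} (hc₀ : 0 < c) (hc₁ : c < 1) :
    SurjOn (inflationRatio c) (Ioo (c / (c - 1)) 1) (Ioi 0) := by
  intro y (hy : 0 < y)
  have hD : 0 < 1 - c + c * y := by nlinarith
  have h_one_sub : 1 - c * (y - 1) / (1 - c + c * y) = (1 - c + c * y)⁻¹ := by
    field_simp; ring
  refine ⟨c * (y - 1) / (1 - c + c * y), ⟨?_, ?_⟩, ?_⟩
  · rw [div_lt_iff_of_neg (sub_neg.mpr hc₁), div_mul_eq_mul_div, div_lt_iff₀ hD]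
    nlinarith
  · linarith [inv_pos.mpr hD]
  · rw [inflationRatio, h_one_sub]
    field_simp
    ring

theorem bijOn_inflationRatio {c : ℝ} (hc₀ : 0 < c) (hc₁ : c < 1) :
    BijOn (inflationRatio c) (Ioo (c / (c - 1)) 1) (Ioi 0) :=
  ⟨mapsTo_inflationRatio hc₀ hc₁,
    (strictMonoOn_inflationRatio hc₀).injOn.mono fun _ hw => hw.2,
    surjOn_inflationRatio hc₀ hc₁⟩

theorem Real.bijOn_log : BijOn Real.log (Ioi 0) univ :=
  ⟨mapsTo_univ _ _, Real.strictMonoOn_log.injOn, Real.surjOn_log⟩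

theorem zero_inflated_deflated_link_general
    (b : ℕ → ℝ) (hb_sum : HasSum b 1)
    (hb0 : b 0 ∈ Ioo (0 : ℝ) 1)
    (ω : ℝ) (hω : ω ∈ Ioo (b 0 / (b 0 - 1)) 1)
    (p : ℕ → ℝ)
    (hp0 : p 0 = ω + (1 - ω) * b 0)
    (hpn : ∀ n, 0 < n → p n = (1 - ω) * b n)
    (L : ℝ → ℝ)
    (hL : ∀ w, L w = Real.log ((w + (1 - w) * b 0) / ((1 - w) * b 0))) :
    (∀ n, 0 < b n → 0 < p n) ∧ HasSum p 1 ∧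
    StrictMonoOn L (Ioo (b 0 / (b 0 - 1)) 1) ∧
    BijOn L (Ioo (b 0 / (b 0 - 1)) 1) univ ∧
    L 0 = 0 := by
  obtain ⟨hc₀, hc₁⟩ := hb0
  have hL_eq : L = Real.log ∘ inflationRatio (b 0) := funext hL
  subst hL_eq
  refine ⟨?_, ?_, ?_, Real.bijOn_log.comp (bijOn_inflationRatio hc₀ hc₁), ?_⟩
  · rintro (_ | n) hbn
    · exact hp0 ▸ add_one_sub_mul_pos_of_mem_Ioo hc₁ hω
    · exact (hpn _ n.succ_pos).symm ▸ mul_pos (sub_pos.mpr hω.2) hbn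
  · simpa using hb_sum.inflate_at 0 ω hp0 fun n hn => hpn n (Nat.pos_of_ne_zero hn)
  · exact Real.strictMonoOn_log.comp ((strictMonoOn_inflationRatio hc₀).mono fun _ hw => hw.2)
      (mapsTo_inflationRatio hc₀ hc₁)
  · simp [inflationRatio_zero hc₀.ne']

/-- The zero-inflated-deflated model: positivity, normalization, and the new
link function ψ = log((ω+(1-ω)b₀)/((1-ω)b₀)) is a strictly increasing
bijection from (b₀/(b₀-1), 1) onto ℝ with ω = 0 ↦ ψ = 0. -/
theorem zero_inflated_deflated_link
    (b : ℕ → ℝ) (hb_nonneg : ∀ n, 0 ≤ b n) (hb_sum : HasSum b 1)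
    (hb0 : b 0 ∈ Ioo (0 : ℝ) 1)
    (ω : ℝ) (hω : ω ∈ Ioo (b 0 / (b 0 - 1)) 1)
    (p : ℕ → ℝ)
    (hp0 : p 0 = ω + (1 - ω) * b 0)
    (hpn : ∀ n, 0 < n → p n = (1 - ω) * b n)
    (L : ℝ → ℝ)
    (hL : ∀ w, L w = Real.log ((w + (1 - w) * b 0) / ((1 - w) * b 0))) :
    (∀ n, 0 < b n → 0 < p n) ∧ HasSum p 1 ∧
    StrictMonoOn L (Ioo (b 0 / (b 0 - 1)) 1) ∧
    BijOn L (Ioo (b 0 / (b 0 - 1)) 1) univ ∧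
    L 0 = 0 :=
  zero_inflated_deflated_link_general b hb_sum hb0 ω hω p hp0 hpn L hL
end

section
/- Let q ≥ 1 and λ > 0 with λ ≠ q. Let b(k) = λᵏe^{-λ}/k! be the Poisson pmf and set φ = 1 + (λ - q)/∑_{k=0}^{q-1}(q - k)·b(k). Then the normalizing constant z = 1 + (φ - 1)·∑_{k=0}^{q} b(k) satisfies z = (∑_{k=0}^{q}(λ - k)·b(k)) / (∑_{k=0}^{q-1}(q - k)·b(k)), and the distribution p(n) = φ^{u_q(n)}·b(n)/z (where u_q(n) = 1 if n ≤ q, 0 otherwise) has mean exactly q. -/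
/-!
The Poisson weights satisfy `(k + 1) b(k + 1) = λ b(k)`, so `∑_{k ≤ q} (λ - k) b(k)` telescopes
to `λ b(q) > 0`; this gives the formula for `z` and its positivity. Tilting `b` by `φ` on
`{0, …, q}` changes the first moment from `λ` to `λ + (φ - 1) ∑_{k ≤ q} k b(k)`, and the choice
of `φ` is exactly `(φ - 1) ∑_{k < q} (q - k) b(k) = λ - q`, which makes this equal to `q z`.
-/

open Finset Real

noncomputable def poissonWeight (lam : ℝ) (k : ℕ) : ℝ := lam ^ k * exp (-lam) / k.factorial

lemma poissonWeight_pos {lam : ℝ} (hlam : 0 < lam) (k : ℕ) : 0 < poissonWeight lam k := by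
  unfold poissonWeight; positivity

section PoissonWeight

variable (lam : ℝ)

lemma succ_mul_poissonWeight_succ (k : ℕ) :
    ((k : ℝ) + 1) * poissonWeight lam (k + 1) = lam * poissonWeight lam k := by
  unfold poissonWeight
  rw [Nat.factorial_succ]
  push_cast
  field_simp
  ring

lemma hasSum_poissonWeight : HasSum (poissonWeight lam) 1 := by
  have h := (NormedSpace.expSeries_div_hasSum_exp lam).mul_right (exp (-lam))
  rw [← exp_eq_exp_ℝ, ← exp_add, add_neg_cancel, exp_zero] at h
  exact h.congr_fun fun k ↦ by rw [poissonWeight, div_mul_eq_mul_div, mul_div_right_comm]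

lemma hasSum_mul_poissonWeight : HasSum (fun k : ℕ ↦ (k : ℝ) * poissonWeight lam k) lam := by
  rw [← hasSum_nat_add_iff' 1]
  simpa [succ_mul_poissonWeight_succ] using (hasSum_poissonWeight lam).mul_left lam

end PoissonWeight

section CommRing

variable {R : Type*} [CommRing R]

lemma sum_range_succ_sub_mul_eq_mul {b : ℕ → R} {lam : R}
    (hb : ∀ k : ℕ, ((k : R) + 1) * b (k + 1) = lam * b k) (q : ℕ) :
    ∑ k ∈ range (q + 1), (lam - k) * b k = lam * b q := by
  induction q with
  | zero => simp
  | succ q ih =>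
    rw [sum_range_succ, ih, ← hb q]
    push_cast
    ring

lemma sum_range_sub_mul_eq_mul_sub (b : ℕ → R) (q : ℕ) :
    ∑ k ∈ range q, ((q : R) - k) * b k =
      q * ∑ k ∈ range (q + 1), b k - ∑ k ∈ range (q + 1), (k : R) * b k := by
  rw [mul_sum, ← sum_sub_distrib, sum_range_succ, sub_self, add_zero]
  exact sum_congr rfl fun k _ ↦ by ring

lemma HasSum.ite_le_mul [TopologicalSpace R] [ContinuousAdd R] {f : ℕ → R} {a : R}
    (hf : HasSum f a) (q : ℕ) (φ : R) :
    HasSum (fun n ↦ (if n ≤ q then φ else 1) * f n)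
      (a + (φ - 1) * ∑ n ∈ range (q + 1), f n) := by
  have hfin : HasSum _ _ :=
    hasSum_sum_of_ne_finset_zero (f := fun n ↦ if n ≤ q then (φ - 1) * f n else 0)
      (s := range (q + 1)) fun n hn ↦ if_neg (by simpa [Nat.lt_succ_iff] using hn)
  rw [sum_congr rfl fun n hn ↦ if_pos (Nat.lt_succ_iff.mp (mem_range.mp hn)), ← mul_sum] at hfin
  exact (hf.add hfin).congr_fun fun n ↦ by split_ifs <;> ring

end CommRing

theorem type2_poisson_mean_q_general
    (q : ℕ) (hq : 1 ≤ q) (lam : ℝ) (hlam : 0 < lam)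
    (b : ℕ → ℝ) (hb : ∀ k, b k = lam ^ k * Real.exp (-lam) / k.factorial)
    (φ : ℝ)
    (hφ : φ = 1 + (lam - q) / ∑ k ∈ Finset.range q, ((q : ℝ) - k) * b k)
    (z : ℝ) (hz : z = 1 + (φ - 1) * ∑ k ∈ Finset.range (q + 1), b k)
    (p : ℕ → ℝ)
    (hp : ∀ n, p n = (if n ≤ q then φ else 1) * b n / z) :
    z = (∑ k ∈ Finset.range (q + 1), (lam - k) * b k) /
        (∑ k ∈ Finset.range q, ((q : ℝ) - k) * b k) ∧
    ∑' n : ℕ, (n : ℝ) * p n = q := by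
  obtain rfl : b = poissonWeight lam := funext hb
  set S := ∑ k ∈ range q, ((q : ℝ) - k) * poissonWeight lam k
  set B := ∑ k ∈ range (q + 1), poissonWeight lam k
  set T := ∑ k ∈ range (q + 1), (k : ℝ) * poissonWeight lam k
  have hS : 0 < S := sum_pos (fun k hk ↦ mul_pos (by simpa using mem_range.mp hk)
    (poissonWeight_pos hlam k)) ⟨0, mem_range.mpr hq⟩
  have hSBT : S = q * B - T := sum_range_sub_mul_eq_mul_sub _ q
  have hN : ∑ k ∈ range (q + 1), (lam - k) * poissonWeight lam k = lam * B - T := by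
    simp only [sub_mul, sum_sub_distrib, mul_sum, B, T]
  have hφ1 : φ - 1 = (lam - q) / S := by rw [hφ]; ring
  have hzS : z = (lam * B - T) / S := by
    rw [hz, hφ1]; field_simp; linarith
  have hz0 : 0 < z := by
    rw [hzS, ← hN, sum_range_succ_sub_mul_eq_mul (succ_mul_poissonWeight_succ lam)]
    exact div_pos (mul_pos hlam (poissonWeight_pos hlam q)) hS
  have hmean : HasSum (fun n : ℕ ↦ (n : ℝ) * p n) ((lam + (φ - 1) * T) / z) :=
    ((hasSum_mul_poissonWeight lam).ite_le_mul q φ).div_const z |>.congr_fun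
      fun n ↦ by rw [hp]; ring
  refine ⟨by rw [hzS, hN], hmean.tsum_eq.trans ?_⟩
  rw [div_eq_iff hz0.ne', hzS, hφ1]
  field_simp
  linear_combination lam * hSBT

/-- Type 2 Poisson model with F = {q} and the special choice of φ: the
normalizing constant identity and mean equal to q. -/
theorem type2_poisson_mean_q
    (q : ℕ) (hq : 1 ≤ q) (lam : ℝ) (hlam : 0 < lam) (hne : lam ≠ q)
    (b : ℕ → ℝ) (hb : ∀ k, b k = lam ^ k * Real.exp (-lam) / k.factorial)
    (φ : ℝ)
    (hφ : φ = 1 + (lam - q) / ∑ k ∈ Finset.range q, ((q : ℝ) - k) * b k)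
    (z : ℝ) (hz : z = 1 + (φ - 1) * ∑ k ∈ Finset.range (q + 1), b k)
    (p : ℕ → ℝ)
    (hp : ∀ n, p n = (if n ≤ q then φ else 1) * b n / z) :
    z = (∑ k ∈ Finset.range (q + 1), (lam - k) * b k) /
        (∑ k ∈ Finset.range q, ((q : ℝ) - k) * b k) ∧
    ∑' n : ℕ, (n : ℝ) * p n = q :=
  type2_poisson_mean_q_general q hq lam hlam b hb φ hφ z hz p hp
end

section
/- Let b : ℕ → ℝ be a probability distribution in one-parameter exponential family form b(n) = h(n)·exp(n·η₁ - A_b(η₁)) with mean μ_b = ∑ n·b(n) and finite second moment. Let F = {n₀, ..., n_m}, α : F → ℝ positive, z = 1 + ∑ᵢ (α(nᵢ) - 1)·b(nᵢ), and p(n) = α(n)^{1_F(n)}·b(n)/z. Then the mean of p satisfies E[N] = μ_b + (1/z)·∑_{i=0}^m (α(nᵢ) - 1)·b(nᵢ)·(nᵢ - μ_b). -/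
/-!
Reweighting a summable series `∑ g n` by `α` on a finite set `F` only adds the finite correction
`∑ k ∈ F, (α k - 1) * g k`; with `g n = n * b n` this gives `z * E[N] = μ_b + T` where
`T = ∑ k ∈ F, (α k - 1) * b k * k`. Since `z = 1 + S` with `S = ∑ k ∈ F, (α k - 1) * b k`, the identity
`(μ_b + T) / (1 + S) = μ_b + (T - μ_b * S) / (1 + S)` centers the correction at `μ_b`. The normalizer is
positive because `b` puts mass at most `1` on `F`.
-/

open Finset

theorem HasSum.ite_mem_mul {ι R : Type*} [DecidableEq ι] [Ring R] [TopologicalSpace R]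
    [ContinuousAdd R]
    {g : ι → R} {μ : R} (hg : HasSum g μ) (F : Finset ι) (α : ι → R) :
    HasSum (fun n => (if n ∈ F then α n else 1) * g n) (μ + ∑ k ∈ F, (α k - 1) * g k) := by
  have hcorr : HasSum (fun n => if n ∈ F then (α n - 1) * g n else 0)
      (∑ k ∈ F, if k ∈ F then (α k - 1) * g k else 0) :=
    hasSum_sum_of_ne_finset_zero fun n hn => if_neg hn
  rw [sum_ite_mem, inter_self] at hcorr
  refine (hg.add hcorr).congr_fun fun n => ?_
  split_ifs <;> noncomm_ring

theorem one_add_sum_sub_one_mul_pos {ι : Type*} {b : ι → ℝ} (hb_pos : ∀ n, 0 < b n)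
    (hb_sum : HasSum b 1) (F : Finset ι) {α : ι → ℝ} (hα : ∀ n ∈ F, 0 < α n) :
    0 < 1 + ∑ k ∈ F, (α k - 1) * b k := by
  have hmass : ∑ k ∈ F, b k ≤ 1 := sum_le_hasSum F (fun n _ => (hb_pos n).le) hb_sum
  have hsplit : 1 + ∑ k ∈ F, (α k - 1) * b k = (1 - ∑ k ∈ F, b k) + ∑ k ∈ F, α k * b k := by
    simp only [sub_mul, one_mul, sum_sub_distrib]
    ring
  rcases F.eq_empty_or_nonempty with rfl | hF
  · simp
  · have := sum_pos (fun k hk => mul_pos (hα k hk) (hb_pos k)) hF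
    linarith

theorem div_one_add_sum_eq_add_sum_sub {ι : Type*} (F : Finset ι) (w x : ι → ℝ) (μ : ℝ)
    (hz : 1 + ∑ k ∈ F, w k ≠ 0) :
    (μ + ∑ k ∈ F, w k * x k) / (1 + ∑ k ∈ F, w k) =
      μ + 1 / (1 + ∑ k ∈ F, w k) * ∑ k ∈ F, w k * (x k - μ) := by
  simp only [mul_sub, sum_sub_distrib, ← sum_mul]
  field_simp
  ring

theorem type1_mean_general
    (b : ℕ → ℝ)
    (hb_pos : ∀ n, 0 < b n) (hb_sum : HasSum b 1)
    (μb : ℝ) (hμb : HasSum (fun n : ℕ => (n : ℝ) * b n) μb)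
    (F : Finset ℕ) (α : ℕ → ℝ) (hα : ∀ n ∈ F, 0 < α n)
    (z : ℝ) (hz : z = 1 + ∑ k ∈ F, (α k - 1) * b k)
    (p : ℕ → ℝ)
    (hp : ∀ n, p n = (if n ∈ F then α n else 1) * b n / z) :
    ∑' n : ℕ, (n : ℝ) * p n =
      μb + (1 / z) * ∑ k ∈ F, (α k - 1) * b k * ((k : ℝ) - μb) := by
  have hmean : HasSum (fun n : ℕ => (n : ℝ) * p n)
      ((μb + ∑ k ∈ F, (α k - 1) * b k * k) / z) := by
    have hterm : ∀ n : ℕ, (n : ℝ) * p n = (if n ∈ F then α n else 1) * (n * b n) / z := by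
      intro n
      rw [hp]
      ring
    simp only [hterm, mul_assoc, mul_comm (b _) (Nat.cast _)]
    exact (hμb.ite_mem_mul F α).div_const z
  rw [hmean.tsum_eq, hz]
  exact div_one_add_sum_eq_add_sum_sub F _ _ μb
    (hz ▸ (one_add_sum_sub_one_mul_pos hb_pos hb_sum F hα).ne')

/-- Mean of the type 1 inflation-deflation model built on a one-parameter
exponential-family base with sufficient statistic T₁(n) = n. -/
theorem type1_mean
    (h : ℕ → ℝ) (η₁ Ab : ℝ)
    (b : ℕ → ℝ)
    (hb_form : ∀ n : ℕ, b n = h n * Real.exp (n * η₁ - Ab))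
    (hb_pos : ∀ n, 0 < b n) (hb_sum : HasSum b 1)
    (μb : ℝ) (hμb : HasSum (fun n : ℕ => (n : ℝ) * b n) μb)
    (hmom2 : Summable (fun n : ℕ => (n : ℝ) ^ 2 * b n))
    (F : Finset ℕ) (α : ℕ → ℝ) (hα : ∀ n ∈ F, 0 < α n)
    (z : ℝ) (hz : z = 1 + ∑ k ∈ F, (α k - 1) * b k)
    (p : ℕ → ℝ)
    (hp : ∀ n, p n = (if n ∈ F then α n else 1) * b n / z) :
    ∑' n : ℕ, (n : ℝ) * p n =
      μb + (1 / z) * ∑ k ∈ F, (α k - 1) * b k * ((k : ℝ) - μb) :=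
  type1_mean_general b hb_pos hb_sum μb hμb F α hα z hz p hp
end

section
/- Let b : ℕ → ℝ be a probability distribution with mean μ_b, variance σ_b², and finite second moment. Let F = {n₀ < ... < n_m}, φ : F → ℝ positive, n_{-1} = -1, z = 1 + ∑_{i=0}^m (∏_{j=i}^m φ(n_j) - 1)·∑_{k=n_{i-1}+1}^{nᵢ} b(k), and p(n) = (∏_{i : n ≤ nᵢ} φ(nᵢ))·b(n)/z. Then the mean of p equals μ_b + (1/z)·∑_{i=0}^m (∏_{j=i}^m φ(n_j) - 1)·∑_{k=n_{i-1}+1}^{nᵢ} b(k)·(k - μ_b). -/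
/-!
Write `w n = ∏_{i : n ≤ nᵢ} φ(nᵢ)`, so that `p = w b / z`. Since the `nᵢ` increase, `w` is
constant, equal to `∏_{j ≥ i} φ(n_j)`, on the `i`-th block `{n_{i-1} + 1, …, nᵢ}` and equals `1`
beyond `n_m`. Hence `(w - 1) f` is finitely supported for every `f`, and its sum is the block sum
`∑ᵢ (∏_{j ≥ i} φ(n_j) - 1) ∑_{k in block i} f k`. Taking `f = b` shows that `z = ∑ w b > 0`;
taking `f n = b n (n - μ_b)`, whose plain sum vanishes, gives
`∑ n w b = μ_b z + (block correction)`.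
-/

open Finset

namespace InflationDeflation

/-- The first point `n_{i-1} + 1` of the `i`-th block, with the convention `n_{-1} = -1`. -/
def blockStart (ns : ℕ → ℕ) (i : ℕ) : ℕ := if i = 0 then 0 else ns (i - 1) + 1

def weight {R : Type*} [CommMonoid R] (ns : ℕ → ℕ) (φ : ℕ → R) (m n : ℕ) : R :=
  ∏ i ∈ range (m + 1), if n ≤ ns i then φ i else 1

variable {ns : ℕ → ℕ} {m : ℕ}

lemma sum_blocks_eq_sum_Icc {M : Type*} [AddCommMonoid M]
    (hmono : MonotoneOn ns (Set.Iic m)) (f : ℕ → M) :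
    ∑ i ∈ range (m + 1), ∑ k ∈ Icc (blockStart ns i) (ns i), f k = ∑ k ∈ Icc 0 (ns m), f k := by
  induction m with
  | zero => simp [blockStart]
  | succ m ih =>
    rw [sum_range_succ, ih (hmono.mono (Set.Iic_subset_Iic.mpr m.le_succ))]
    simp only [blockStart, Nat.add_one_ne_zero, if_false, Nat.add_sub_cancel,
      ← Ico_add_one_right_eq_Icc]
    refine sum_Ico_consecutive f (Nat.zero_le _) (Nat.succ_le_succ ?_)
    exact hmono (Set.mem_Iic.mpr m.le_succ) Set.self_mem_Iic m.le_succ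

lemma weight_eq_prod_Icc_of_mem_block {R : Type*} [CommMonoid R]
    (hmono : MonotoneOn ns (Set.Iic m)) (φ : ℕ → R) {i k : ℕ} (hi : i ≤ m)
    (hk : k ∈ Icc (blockStart ns i) (ns i)) :
    weight ns φ m k = ∏ j ∈ Icc i m, φ j := by
  rw [weight, ← prod_filter]
  congr 1
  ext j
  simp only [mem_Icc, mem_filter, mem_range, blockStart] at hk ⊢
  constructor
  · rintro ⟨hjm, hkj⟩
    refine ⟨?_, by omega⟩
    by_contra! hji
    have := hmono (Set.mem_Iic.mpr (by omega : j ≤ m))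
      (Set.mem_Iic.mpr (by omega : i - 1 ≤ m)) (Nat.le_sub_one_of_lt hji)
    split_ifs at hk <;> omega
  · rintro ⟨hij, hjm⟩
    exact ⟨by omega, hk.2.trans (hmono (Set.mem_Iic.mpr hi) (Set.mem_Iic.mpr hjm) hij)⟩

lemma weight_eq_one_of_lt {R : Type*} [CommMonoid R] (hmono : MonotoneOn ns (Set.Iic m))
    (φ : ℕ → R) {n : ℕ} (hn : ns m < n) : weight ns φ m n = 1 :=
  prod_eq_one fun j hj => if_neg <| by
    have hjm : j ≤ m := Nat.lt_succ_iff.mp (mem_range.mp hj)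
    have := hmono (Set.mem_Iic.mpr hjm) Set.self_mem_Iic hjm
    omega

lemma weight_pos {R : Type*} [CommSemiring R] [PartialOrder R] [IsStrictOrderedRing R]
    (ns : ℕ → ℕ) {φ : ℕ → R} (hφ : ∀ i ≤ m, 0 < φ i) (n : ℕ) : 0 < weight ns φ m n :=
  prod_pos fun i hi => by
    split_ifs
    · exact hφ i (Nat.lt_succ_iff.mp (mem_range.mp hi))
    · exact one_pos

lemma hasSum_weight_sub_one_mul {R : Type*} [CommRing R] [TopologicalSpace R]
    (hmono : MonotoneOn ns (Set.Iic m)) (φ : ℕ → R) (f : ℕ → R) :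
    HasSum (fun n => (weight ns φ m n - 1) * f n)
      (∑ i ∈ range (m + 1), ((∏ j ∈ Icc i m, φ j) - 1) *
        ∑ k ∈ Icc (blockStart ns i) (ns i), f k) := by
  have hblocks : ∑ i ∈ range (m + 1), ((∏ j ∈ Icc i m, φ j) - 1) *
      ∑ k ∈ Icc (blockStart ns i) (ns i), f k =
      ∑ n ∈ Icc 0 (ns m), (weight ns φ m n - 1) * f n := by
    rw [← sum_blocks_eq_sum_Icc hmono]
    refine sum_congr rfl fun i hi => ?_
    rw [mul_sum]
    refine sum_congr rfl fun k hk => ?_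
    rw [weight_eq_prod_Icc_of_mem_block hmono φ (Nat.lt_succ_iff.mp (mem_range.mp hi)) hk]
  rw [hblocks]
  exact hasSum_sum_of_ne_finset_zero fun n hn => by
    rw [weight_eq_one_of_lt hmono φ (by simpa using hn), sub_self, zero_mul]

end InflationDeflation

open InflationDeflation in
theorem type2_mean_general
    (b : ℕ → ℝ) (hb_pos : ∀ n, 0 < b n) (hb_sum : HasSum b 1)
    (μb : ℝ) (hμb : HasSum (fun n : ℕ => (n : ℝ) * b n) μb)
    (m : ℕ) (ns : ℕ → ℕ)
    (hmono : ∀ i, i < m → ns i < ns (i + 1))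
    (φ : ℕ → ℝ) (hφ : ∀ i, i ≤ m → 0 < φ i)
    (z : ℝ)
    (hz : z = 1 + ∑ i ∈ Finset.range (m + 1),
      ((∏ j ∈ Finset.Icc i m, φ j) - 1) *
        ∑ k ∈ Finset.Icc (if i = 0 then 0 else ns (i - 1) + 1) (ns i), b k)
    (p : ℕ → ℝ)
    (hp : ∀ n, p n =
      (∏ i ∈ Finset.range (m + 1), if n ≤ ns i then φ i else 1) * b n / z) :
    ∑' n : ℕ, (n : ℝ) * p n =
      μb + (1 / z) * ∑ i ∈ Finset.range (m + 1),
        ((∏ j ∈ Finset.Icc i m, φ j) - 1) *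
          ∑ k ∈ Finset.Icc (if i = 0 then 0 else ns (i - 1) + 1) (ns i),
            b k * ((k : ℝ) - μb) := by
  have hmono' : MonotoneOn ns (Set.Iic m) := (strictMonoOn_Iic_of_lt_succ hmono).monotoneOn
  have hz_sum : HasSum (fun n => weight ns φ m n * b n) z := by
    rw [hz]
    exact (hb_sum.add (hasSum_weight_sub_one_mul hmono' φ b)).congr_fun fun n => by ring
  have hz_pos : 0 < z := hz_sum.tsum_eq ▸ hz_sum.summable.tsum_pos
    (fun n => (mul_pos (weight_pos ns hφ n) (hb_pos n)).le) 0
    (mul_pos (weight_pos ns hφ 0) (hb_pos 0))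
  have hcentered : HasSum (fun n : ℕ => b n * ((n : ℝ) - μb)) 0 := by
    have h := hμb.sub (hb_sum.mul_left μb)
    rw [mul_one, sub_self] at h
    exact h.congr_fun fun n => by ring
  have hcorr := hasSum_weight_sub_one_mul hmono' φ fun n => b n * ((n : ℝ) - μb)
  -- `n w b = b (n - μb) + (w - 1) b (n - μb) + μb w b`
  have hmean := ((hcentered.add hcorr).add (hz_sum.mul_left μb)).div_const z
  rw [(hmean.congr_fun fun n => ?_).tsum_eq]
  · field_simp
    simp only [blockStart]
    ring
  · rw [hp, weight]
    ring

/-- Mean of the type 2 inflation-deflation model: the base mean plus a finite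
correction supported on {0, ..., n_m}. -/
theorem type2_mean
    (b : ℕ → ℝ) (hb_pos : ∀ n, 0 < b n) (hb_sum : HasSum b 1)
    (μb : ℝ) (hμb : HasSum (fun n : ℕ => (n : ℝ) * b n) μb)
    (σb2 : ℝ)
    (hσb2 : HasSum (fun n : ℕ => ((n : ℝ) - μb) ^ 2 * b n) σb2)
    (m : ℕ) (ns : ℕ → ℕ)
    (hmono : ∀ i, i < m → ns i < ns (i + 1))
    (φ : ℕ → ℝ) (hφ : ∀ i, i ≤ m → 0 < φ i)
    (z : ℝ)
    (hz : z = 1 + ∑ i ∈ Finset.range (m + 1),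
      ((∏ j ∈ Finset.Icc i m, φ j) - 1) *
        ∑ k ∈ Finset.Icc (if i = 0 then 0 else ns (i - 1) + 1) (ns i), b k)
    (p : ℕ → ℝ)
    (hp : ∀ n, p n =
      (∏ i ∈ Finset.range (m + 1), if n ≤ ns i then φ i else 1) * b n / z) :
    ∑' n : ℕ, (n : ℝ) * p n =
      μb + (1 / z) * ∑ i ∈ Finset.range (m + 1),
        ((∏ j ∈ Finset.Icc i m, φ j) - 1) *
          ∑ k ∈ Finset.Icc (if i = 0 then 0 else ns (i - 1) + 1) (ns i),
            b k * ((k : ℝ) - μb) :=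
  type2_mean_general b hb_pos hb_sum μb hμb m ns hmono φ hφ z hz p hp
end
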